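/- Let d ≥ 2, N ≥ 2, and j ∈ {2,…,N}. For i = 1,…,d−1 define P_i : ℂ → ℂ by P_i(α) = ∑_{k=2}^N α^{i·d^{N−k}}, and let G_j = { ∑_{k∈{2,…,N}∖{j}} i_k·d^{N−k} : i_k ∈ {0,…,d−1} }. Then the family of functions from ℂ to ℂ consisting of α ↦ α^g for g ∈ G_j together with α ↦ α^g·P_s(α) for g ∈ G_j and s = 1,…,d−1 is linearly independent over ℂ. -/

import Mathlib

open Finset Polynomial

/-- The set `G_j = { ∑_{k∈{2,…,N}∖{j}} i_k·d^{N-k} : i_k ∈ {0,…,d-1} }`. -/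
def GSet (d N j : ℕ) : Set ℕ :=
  {n : ℕ | ∃ i : ℕ → ℕ, (∀ k ∈ (Finset.Icc 2 N).erase j, i k < d) ∧
    n = ∑ k ∈ (Finset.Icc 2 N).erase j, i k * d ^ (N - k)}

lemma stmt15core (d : ℕ) (hd : 2 ≤ d) :
    ∀ B (b c : ℕ → ℕ), (∀ u, c u < d) →
    ∑ u ∈ Finset.range B, b u * d ^ u = ∑ u ∈ Finset.range B, c u * d ^ u →
    (∑ u ∈ Finset.range B, c u ≤ ∑ u ∈ Finset.range B, b u ∧
      (∑ u ∈ Finset.range B, b u = ∑ u ∈ Finset.range B, c u → ∀ u < B, b u = c u)) := by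
  intro B
  induction B with
  | zero => simp
  | succ B ih =>
    intro b c hc heq
    rw [Finset.sum_range_succ', Finset.sum_range_succ'] at heq
    simp only [pow_zero, mul_one, pow_succ] at heq
    have h1 : b 0 + (∑ u ∈ Finset.range B, b (u+1) * d ^ u) * d
        = c 0 + (∑ u ∈ Finset.range B, c (u+1) * d ^ u) * d := by
      rw [Finset.sum_mul, Finset.sum_mul]
      simp only [mul_assoc] at heq ⊢
      omega
    set Rb := ∑ u ∈ Finset.range B, b (u+1) * d ^ u with hRb
    set Rc := ∑ u ∈ Finset.range B, c (u+1) * d ^ u with hRc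
    have hc0 : c 0 = b 0 % d := by
      have h2 : (b 0 + Rb * d) % d = (c 0 + Rc * d) % d := by rw [h1]
      rw [Nat.add_mul_mod_self_right, Nat.add_mul_mod_self_right,
        Nat.mod_eq_of_lt (hc 0)] at h2
      exact h2.symm
    set q := b 0 / d with hq
    have hdm : d * q + b 0 % d = b 0 := Nat.div_add_mod (b 0) d
    have hq2 : 2 * q ≤ d * q := Nat.mul_le_mul_right q hd
    have h3 : q + Rb = Rc := by
      have h4 : (q + Rb) * d = Rc * d := by
        zify at h1 hdm hc0 ⊢
        linear_combination h1 + hdm + hc0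
      exact Nat.eq_of_mul_eq_mul_right (by omega) h4
    rcases Nat.eq_zero_or_pos B with hB | hB
    · subst hB
      have e1 : Rb = 0 := by simp [hRb]
      have e2 : Rc = 0 := by simp [hRc]
      rw [Finset.sum_range_one, Finset.sum_range_one]
      constructor
      · omega
      · intro h u hu
        interval_cases u
        omega
    · set b' : ℕ → ℕ := fun u => (if u = 0 then q else 0) + b (u+1) with hb'
      have hsplit : ∀ f : ℕ → ℕ, ∑ u ∈ Finset.range B, b' u * f u
          = q * f 0 + ∑ u ∈ Finset.range B, b (u+1) * f u := by
        intro f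
        simp only [hb', add_mul, Finset.sum_add_distrib, ite_mul, zero_mul]
        congr 1
        rw [Finset.sum_ite_eq' (Finset.range B) 0 (fun u => q * f u)]
        simp [Finset.mem_range, hB]
      have hval : ∑ u ∈ Finset.range B, b' u * d ^ u = ∑ u ∈ Finset.range B, c (u+1) * d ^ u := by
        rw [hsplit (fun u => d ^ u)]
        simp only [pow_zero, mul_one]
        omega
      obtain ⟨ihle, iheq⟩ := ih b' (fun u => c (u+1)) (fun u => hc (u+1)) hval
      have hb'sum : ∑ u ∈ Finset.range B, b' u = q + ∑ u ∈ Finset.range B, b (u+1) := by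
        have := hsplit (fun _ => 1)
        simpa using this
      rw [Finset.sum_range_succ', Finset.sum_range_succ']
      constructor
      · omega
      · intro hsum u hu
        have hq0 : q = 0 := by omega
        have hsum' : ∑ u ∈ Finset.range B, b' u = ∑ u ∈ Finset.range B, c (u+1) := by omega
        have heqall := iheq hsum'
        rcases u with _ | v
        · omega
        · have h5 := heqall v (by omega)
          simp only [hb', hq0, ite_self, zero_add] at h5
          omega

lemma stmt15vec (d N j : ℕ) (hd : 2 ≤ d) (hN : 2 ≤ N) (hj2 : 2 ≤ j) (hjN : j ≤ N)
    (g : ℕ) (hg : g ∈ GSet d N j) :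
    ∃ a : ℕ → ℕ, (∀ u, a u < d) ∧ a (N - j) = 0 ∧
      g = ∑ u ∈ Finset.range (N - 1), a u * d ^ u := by
  obtain ⟨i, hi, hsum⟩ := hg
  refine ⟨fun u => if u ∈ (Finset.range (N-1)).erase (N-j) then i (N-u) else 0, ?_, ?_, ?_⟩
  · intro u
    dsimp only
    by_cases h : u ∈ (Finset.range (N-1)).erase (N-j)
    · rw [if_pos h]
      apply hi
      simp only [Finset.mem_erase, Finset.mem_range] at h
      simp only [Finset.mem_erase, Finset.mem_Icc]
      omega
    · rw [if_neg h]; omega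
  · dsimp only
    rw [if_neg (Finset.notMem_erase _ _)]
  · rw [hsum]
    rw [← Finset.sum_subset (Finset.erase_subset (N-j) (Finset.range (N-1)))
      (fun x _ hx => by dsimp only; rw [if_neg hx, zero_mul])]
    refine Finset.sum_nbij' (fun k => N - k) (fun u => N - u) ?_ ?_ ?_ ?_ ?_
    · intro k hk
      simp only [Finset.mem_erase, Finset.mem_Icc] at hk
      simp only [Finset.mem_erase, Finset.mem_range]
      omega
    · intro u hu
      simp only [Finset.mem_erase, Finset.mem_range] at hu
      simp only [Finset.mem_erase, Finset.mem_Icc]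
      omega
    · intro k hk
      simp only [Finset.mem_erase, Finset.mem_Icc] at hk
      omega
    · intro u hu
      simp only [Finset.mem_erase, Finset.mem_range] at hu
      omega
    · intro k hk
      have hk' : N - k ∈ (Finset.range (N-1)).erase (N-j) := by
        simp only [Finset.mem_erase, Finset.mem_Icc] at hk
        simp only [Finset.mem_erase, Finset.mem_range]
        omega
      dsimp only
      rw [if_pos hk']
      simp only [Finset.mem_erase, Finset.mem_Icc] at hk
      have h2 : N - (N - k) = k := by omega
      rw [h2]

theorem stmt15 (d N j : ℕ) (hd : 2 ≤ d) (hN : 2 ≤ N) (hj : j ∈ Finset.Icc 2 N) :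
    LinearIndependent ℂ (fun p : GSet d N j × Fin d => fun α : ℂ =>
      α ^ (p.1 : ℕ) *
        (if (p.2 : ℕ) = 0 then 1
         else ∑ t ∈ Finset.range (N - 1), α ^ ((p.2 : ℕ) * d ^ t))) := by
  classical
  have hj2 : 2 ≤ j := (Finset.mem_Icc.mp hj).1
  have hjN : j ≤ N := (Finset.mem_Icc.mp hj).2
  have hNj_mem : N - j ∈ Finset.range (N - 1) := by
    simp only [Finset.mem_range]; omega
  rw [linearIndependent_iff']
  intro s cf hrel p0 hp0
  by_contra hne
  -- digit vectors
  have gvecall : ∀ p : GSet d N j × Fin d, ∃ a : ℕ → ℕ, (∀ u, a u < d) ∧ a (N-j) = 0 ∧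
      (p.1 : ℕ) = ∑ u ∈ Finset.range (N-1), a u * d ^ u :=
    fun p => stmt15vec d N j hd hN hj2 hjN p.1 p.1.2
  choose A hA1 hA2 hA3 using gvecall
  -- helper : adding v at position t
  have hvecsum : ∀ (a : ℕ → ℕ) (v t : ℕ), t ∈ Finset.range (N-1) →
      (∑ u ∈ Finset.range (N-1), (a u + if u = t then v else 0) * d ^ u
        = (∑ u ∈ Finset.range (N-1), a u * d ^ u) + v * d ^ t) ∧
      (∑ u ∈ Finset.range (N-1), (a u + if u = t then v else 0)
        = (∑ u ∈ Finset.range (N-1), a u) + v) := by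
    intro a v t ht
    constructor
    · simp only [add_mul, Finset.sum_add_distrib, ite_mul, zero_mul]
      rw [Finset.sum_ite_eq' (Finset.range (N-1)) t (fun u => v * d ^ u), if_pos ht]
    · rw [Finset.sum_add_distrib,
        Finset.sum_ite_eq' (Finset.range (N-1)) t (fun _ => v), if_pos ht]
  -- weight comparison helper
  have hkey : ∀ x y sx sy : ℕ, sx < d → x + 1 ≤ y → x * d + sx < y * d + sy := by
    intro x y sx sy h1 h2
    have h3 : (x + 1) * d ≤ y * d := Nat.mul_le_mul_right d h2
    nlinarith
  -- weight
  set w : (GSet d N j × Fin d) → ℕ :=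
    fun p => ((∑ u ∈ Finset.range (N-1), A p u) + (p.2:ℕ)) * d + (p.2:ℕ) with hw
  set T := s.filter (fun p => cf p ≠ 0) with hT
  have hTne : T.Nonempty := ⟨p0, by simp [hT, hp0, hne]⟩
  obtain ⟨q0, hq0T, hq0max⟩ := Finset.exists_max_image T w hTne
  have hq0s : q0 ∈ s := (Finset.mem_filter.mp hq0T).1
  have hq0ne : cf q0 ≠ 0 := (Finset.mem_filter.mp hq0T).2
  -- polynomials
  set Q : (GSet d N j × Fin d) → Polynomial ℂ := fun p =>
    if (p.2:ℕ) = 0 then Polynomial.X ^ (p.1:ℕ)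
    else ∑ t ∈ Finset.range (N-1), Polynomial.X ^ ((p.1:ℕ) + (p.2:ℕ) * d ^ t) with hQ
  have hpoly : (∑ p ∈ s, cf p • Q p) = 0 := by
    apply Polynomial.funext
    intro α
    have h0 := congrFun hrel α
    simp only [Finset.sum_apply, Pi.smul_apply, Pi.zero_apply, smul_eq_mul] at h0
    rw [Polynomial.eval_zero, Polynomial.eval_finset_sum, ← h0]
    refine Finset.sum_congr rfl fun p hp => ?_
    simp only [Polynomial.eval_smul, smul_eq_mul]
    congr 1
    by_cases hs : (p.2:ℕ) = 0
    · simp [hQ, hs]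
    · rw [hQ]
      dsimp only
      rw [if_neg hs, if_neg hs, Polynomial.eval_finset_sum, Finset.mul_sum]
      refine Finset.sum_congr rfl fun t _ => ?_
      rw [Polynomial.eval_pow, Polynomial.eval_X, pow_add]
  set E := (q0.1 : ℕ) + (q0.2 : ℕ) * d ^ (N - j) with hE
  have hcoeff := congrArg (fun P => Polynomial.coeff P E) hpoly
  simp only [Polynomial.finset_sum_coeff, Polynomial.coeff_smul, Polynomial.coeff_zero,
    smul_eq_mul] at hcoeff
  -- digit vector of E
  set cvec : ℕ → ℕ := fun u => A q0 u + (if u = N - j then (q0.2:ℕ) else 0) with hcvec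
  have hclt : ∀ u, cvec u < d := by
    intro u
    by_cases h : u = N - j
    · simp only [hcvec, h, if_pos rfl, hA2, zero_add]
      exact (q0.2).2
    · simp only [hcvec, if_neg h, add_zero]
      exact hA1 q0 u
  have hcval : E = ∑ u ∈ Finset.range (N-1), cvec u * d ^ u := by
    rw [hE, (hvecsum (A q0) (q0.2:ℕ) (N-j) hNj_mem).1, ← hA3]
  have hcsum : ∑ u ∈ Finset.range (N-1), cvec u
      = (∑ u ∈ Finset.range (N-1), A q0 u) + (q0.2:ℕ) :=
    (hvecsum (A q0) (q0.2:ℕ) (N-j) hNj_mem).2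
  have hNjlt : N - j < N - 1 := by omega
  -- off-diagonal terms vanish
  have hterm : ∀ p ∈ s, p ≠ q0 → cf p * (Q p).coeff E = 0 := by
    intro p hps hpne
    by_cases hcf : cf p = 0
    · rw [hcf, zero_mul]
    have hwle : w p ≤ w q0 := hq0max p (Finset.mem_filter.mpr ⟨hps, hcf⟩)
    suffices h : (Q p).coeff E = 0 by rw [h, mul_zero]
    by_contra hco
    by_cases hs : (p.2:ℕ) = 0
    · have hQc : (Q p).coeff E = if E = (p.1:ℕ) then 1 else 0 := by
        rw [hQ]; dsimp only
        rw [if_pos hs, Polynomial.coeff_X_pow]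
      rw [hQc] at hco
      have hgE : (p.1:ℕ) = E := by
        by_contra h; rw [if_neg (fun h2 => h h2.symm)] at hco; exact hco rfl
      have hvaleq : ∑ u ∈ Finset.range (N-1), A p u * d ^ u
          = ∑ u ∈ Finset.range (N-1), cvec u * d ^ u := by
        rw [← hA3, hgE, hcval]
      obtain ⟨hle1, heqc1⟩ := stmt15core d hd (N-1) (A p) cvec hclt hvaleq
      obtain ⟨hle2, _⟩ := stmt15core d hd (N-1) cvec (A p) (hA1 p) hvaleq.symm
      have heqall := heqc1 (le_antisymm hle2 hle1)
      have hs0 : (q0.2:ℕ) = 0 := by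
        have h1 := heqall (N-j) hNjlt
        simp only [hcvec, hA2, zero_add, eq_self_iff_true, if_true] at h1
        omega
      have hgeq : (p.1:ℕ) = (q0.1:ℕ) := by
        rw [hA3 p, hA3 q0]
        refine Finset.sum_congr rfl fun u hu => ?_
        have h1 := heqall u (Finset.mem_range.mp hu)
        simp only [hcvec] at h1
        by_cases h2 : u = N - j
        · rw [h2, hA2, hA2]
        · rw [if_neg h2, add_zero] at h1
          rw [h1]
      apply hpne
      have e1 : p.1 = q0.1 := Subtype.ext hgeq
      have e2 : p.2 = q0.2 := by apply Fin.ext; omega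
      exact Prod.ext e1 e2
    · have hQc : (Q p).coeff E
          = ∑ t ∈ Finset.range (N-1), if E = (p.1:ℕ) + (p.2:ℕ) * d ^ t then 1 else 0 := by
        rw [hQ]; dsimp only
        rw [if_neg hs, Polynomial.finset_sum_coeff]
        exact Finset.sum_congr rfl fun t _ => Polynomial.coeff_X_pow _ _
      rw [hQc] at hco
      obtain ⟨t, ht, hteq0⟩ := Finset.exists_ne_zero_of_sum_ne_zero hco
      have hteq : (p.1:ℕ) + (p.2:ℕ) * d ^ t = E := by
        by_contra h; rw [if_neg (fun h2 => h h2.symm)] at hteq0; exact hteq0 rfl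
      set bvec : ℕ → ℕ := fun u => A p u + (if u = t then (p.2:ℕ) else 0) with hbvec
      have hbval : ∑ u ∈ Finset.range (N-1), bvec u * d ^ u
          = ∑ u ∈ Finset.range (N-1), cvec u * d ^ u := by
        rw [(hvecsum (A p) (p.2:ℕ) t ht).1, ← hA3, hteq, hcval]
      have hbsum : ∑ u ∈ Finset.range (N-1), bvec u
          = (∑ u ∈ Finset.range (N-1), A p u) + (p.2:ℕ) :=
        (hvecsum (A p) (p.2:ℕ) t ht).2
      obtain ⟨hle1, heqc1⟩ := stmt15core d hd (N-1) bvec cvec hclt hbval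
      rcases lt_or_eq_of_le hle1 with hlt | heqs
      · -- strictly larger weight : contradiction with maximality
        refine absurd hwle (not_le.mpr ?_)
        rw [hcsum, hbsum] at hlt
        simp only [hw]
        exact hkey _ _ _ _ (q0.2).2 hlt
      · have heqall := heqc1 heqs.symm
        by_cases htj : t = N - j
        · -- diagonal : contradiction with p ≠ q0
          subst htj
          have hseq : (p.2:ℕ) = (q0.2:ℕ) := by
            have h1 := heqall (N-j) hNjlt
            simp only [hbvec, hcvec, hA2, zero_add, eq_self_iff_true, if_true] at h1
            exact h1
          have hgeq : (p.1:ℕ) = (q0.1:ℕ) := by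
            rw [hA3 p, hA3 q0]
            refine Finset.sum_congr rfl fun u hu => ?_
            have h1 := heqall u (Finset.mem_range.mp hu)
            simp only [hbvec, hcvec] at h1
            by_cases h2 : u = N - j
            · rw [h2, hA2, hA2]
            · rw [if_neg h2, if_neg h2, add_zero, add_zero] at h1
              rw [h1]
          exact hpne (Prod.ext (Subtype.ext hgeq) (Fin.ext hseq))
        · -- t ≠ N - j : then s0 = 0 < s, equal weight, contradiction
          have hs0 : (q0.2:ℕ) = 0 := by
            have h1 := heqall (N-j) hNjlt
            simp only [hbvec, hcvec, hA2, zero_add, eq_self_iff_true, if_true] at h1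
            rw [if_neg (fun h => htj h.symm)] at h1
            omega
          refine absurd hwle (not_le.mpr ?_)
          rw [hcsum, hbsum] at heqs
          simp only [hw]
          rw [← heqs, hs0]
          have hsp1 : 1 ≤ (p.2:ℕ) := Nat.one_le_iff_ne_zero.mpr hs
          omega
  rw [Finset.sum_eq_single q0 hterm (fun h => absurd hq0s h)] at hcoeff
  -- diagonal coefficient is 1
  have hcond : ∀ t, ((q0.1:ℕ) + (q0.2:ℕ) * d ^ t = E) → (q0.2:ℕ) ≠ 0 → t = N - j := by
    intro t h hs
    have hs0 : 0 < (q0.2:ℕ) := Nat.pos_of_ne_zero hs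
    have hpow : (q0.2:ℕ) * d ^ t = (q0.2:ℕ) * d ^ (N-j) := by omega
    have := Nat.eq_of_mul_eq_mul_left hs0 hpow
    exact Nat.pow_right_injective hd this
  have hdiag : (Q q0).coeff E = 1 := by
    rw [hQ]; dsimp only
    by_cases hs : (q0.2:ℕ) = 0
    · rw [if_pos hs, Polynomial.coeff_X_pow, if_pos]
      rw [hE, hs, zero_mul, add_zero]
    · rw [if_neg hs, Polynomial.finset_sum_coeff]
      have hstep : ∀ t ∈ Finset.range (N-1),
          (Polynomial.X ^ ((q0.1:ℕ) + (q0.2:ℕ) * d ^ t) : Polynomial ℂ).coeff E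
            = if t = N - j then 1 else 0 := by
        intro t _
        rw [Polynomial.coeff_X_pow]
        by_cases h : t = N - j
        · rw [if_pos h, if_pos]
          rw [h, hE]
        · rw [if_neg h, if_neg]
          intro hcontra
          exact h (hcond t hcontra.symm hs)
      rw [Finset.sum_congr rfl hstep,
        Finset.sum_ite_eq' (Finset.range (N-1)) (N-j) (fun _ => (1:ℂ)), if_pos hNj_mem]
  rw [hdiag, mul_one] at hcoeff
  exact hq0ne hcoeff
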